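/- Let G be a graph with h(G) = bw(G), let d^opt ∈ ℝ^n satisfy g(G,d^opt) = bw(G) and ∑_i d^opt_i = 4·bw(G) − 2|E|, and let B^opt = A + diag(d^opt). Then λ_S(B^opt) = 0, and for every optimum bisection vector y (cw(y) = bw(G)) the Rayleigh quotient satisfies yᵀ B^opt y / ‖y‖² = (sum(B^opt) − 4·bw(G))/n = 0. -/
import Mathlib


open Matrix BigOperators Finset

noncomputable section

/-- Adjacency matrix of a graph on `Fin n`, with real entries. -/
def adjA {n : ℕ} (G : SimpleGraph (Fin n)) [DecidableRel G.Adj] :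
    Matrix (Fin n) (Fin n) ℝ :=
  Matrix.of fun i j => if G.Adj i j then (1 : ℝ) else 0

/-- A bisection vector: entries in `{+1, -1}` summing to zero. -/
def IsBisection {n : ℕ} (x : Fin n → ℝ) : Prop :=
  (∀ i, x i = 1 ∨ x i = -1) ∧ ∑ i, x i = 0

/-- Cut width of a `±1` vector: `∑_{{i,j}∈E} (1 - x_i x_j)/2`, written as a sum
over ordered pairs (each edge counted twice, hence the `/4`). -/
def cw {n : ℕ} (G : SimpleGraph (Fin n)) [DecidableRel G.Adj] (x : Fin n → ℝ) : ℝ :=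
  (∑ i, ∑ j, adjA G i j * (1 - x i * x j)) / 4

/-- Bisection width: minimum cut width over all bisection vectors. -/
def bw {n : ℕ} (G : SimpleGraph (Fin n)) [DecidableRel G.Adj] : ℝ :=
  sInf {c | ∃ x : Fin n → ℝ, IsBisection x ∧ cw G x = c}

/-- `λ_S(B)`: supremum of the Rayleigh quotient of `B` over nonzero vectors of
coordinate sum zero. -/
def lamS {n : ℕ} (B : Matrix (Fin n) (Fin n) ℝ) : ℝ :=
  sSup {r | ∃ x : Fin n → ℝ, x ≠ 0 ∧ ∑ i, x i = 0 ∧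
    r = (x ⬝ᵥ B.mulVec x) / (∑ i, (x i) ^ 2)}

/-- Sum of all entries of a matrix. -/
def msum {n : ℕ} (M : Matrix (Fin n) (Fin n) ℝ) : ℝ := ∑ i, ∑ j, M i j

/-- Boppana's function `g(G,d)`. -/
def gB {n : ℕ} (G : SimpleGraph (Fin n)) [DecidableRel G.Adj] (d : Fin n → ℝ) : ℝ :=
  (msum (adjA G + Matrix.diagonal d) - n * lamS (adjA G + Matrix.diagonal d)) / 4

/-- Boppana's lower bound `h(G) = sup_d g(G,d)`. -/
def hB {n : ℕ} (G : SimpleGraph (Fin n)) [DecidableRel G.Adj] : ℝ :=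
  sSup {r | ∃ d : Fin n → ℝ, r = gB G d}

/-- Number of edges of `G`. -/
def edgeCount {n : ℕ} (G : SimpleGraph (Fin n)) [DecidableRel G.Adj] : ℕ :=
  G.edgeFinset.card

lemma msum_adjA {n : ℕ} (G : SimpleGraph (Fin n)) [DecidableRel G.Adj] :
    msum (adjA G) = 2 * (edgeCount G : ℝ) := by
  have h : ∀ i : Fin n, ∑ j, adjA G i j = (G.degree i : ℝ) := by
    intro i
    simp only [adjA, Matrix.of_apply, Finset.sum_boole]
    congr 1
    rw [← SimpleGraph.card_neighborFinset_eq_degree]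
    congr 1
    ext j
    simp [SimpleGraph.mem_neighborFinset]
  have := SimpleGraph.sum_degrees_eq_twice_card_edges G
  unfold msum edgeCount
  simp only [h]
  push_cast
  exact_mod_cast congrArg (Nat.cast : ℕ → ℝ) this

/-- with `∑_i d^opt_i = 4·bw(G) - 2|E|` we get `λ_S(B^opt) = 0`,
and for every optimum bisection vector `y` the Rayleigh quotient equals
`(sum(B^opt) - 4·bw(G))/n = 0`. -/
theorem rayleigh_quotient_of_optimum {n : ℕ} (hn2 : 2 ≤ n) (hne : Even n)
    (G : SimpleGraph (Fin n)) [DecidableRel G.Adj] (dopt : Fin n → ℝ)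
    (hh : hB G = bw G) (hg : gB G dopt = bw G)
    (hsum : ∑ i, dopt i = 4 * bw G - 2 * (edgeCount G : ℝ)) :
    lamS (adjA G + Matrix.diagonal dopt) = 0 ∧
    ∀ y : Fin n → ℝ, IsBisection y → cw G y = bw G →
      (y ⬝ᵥ (adjA G + Matrix.diagonal dopt).mulVec y) / (∑ i, (y i) ^ 2)
          = (msum (adjA G + Matrix.diagonal dopt) - 4 * bw G) / (n : ℝ) ∧
      (msum (adjA G + Matrix.diagonal dopt) - 4 * bw G) / (n : ℝ) = 0 := by
  have hnne : (n : ℝ) ≠ 0 := by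
    have : 0 < n := by omega
    exact_mod_cast this.ne'
  have hmsum : msum (adjA G + Matrix.diagonal dopt) = 4 * bw G := by
    have hsplit : msum (adjA G + Matrix.diagonal dopt)
        = msum (adjA G) + ∑ i, dopt i := by
      unfold msum
      simp [Matrix.add_apply, Finset.sum_add_distrib, Matrix.diagonal_apply,
        Finset.sum_ite_eq]
    rw [hsplit, msum_adjA, hsum]; ring
  have hlam : lamS (adjA G + Matrix.diagonal dopt) = 0 := by
    unfold gB at hg
    rw [hmsum] at hg
    have h0 : (n : ℝ) * lamS (adjA G + Matrix.diagonal dopt) = 0 := by linarith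
    rcases mul_eq_zero.mp h0 with h | h
    · exact absurd h hnne
    · exact h
  refine ⟨hlam, fun y hy hcw => ?_⟩
  have hrhs : (msum (adjA G + Matrix.diagonal dopt) - 4 * bw G) / (n : ℝ) = 0 := by
    rw [hmsum]; simp
  have hy1 : ∀ i, y i ^ 2 = 1 := by
    intro i; rcases hy.1 i with h | h <;> simp [h]
  have hnum : y ⬝ᵥ (adjA G + Matrix.diagonal dopt).mulVec y = 0 := by
    have hA : y ⬝ᵥ (adjA G).mulVec y = msum (adjA G) - 4 * bw G := by
      have hc : ∑ i, ∑ j, adjA G i j * (1 - y i * y j) = 4 * bw G := by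
        unfold cw at hcw; linarith
      have expand : y ⬝ᵥ (adjA G).mulVec y
          = ∑ i, ∑ j, adjA G i j * (y i * y j) := by
        simp only [dotProduct, Matrix.mulVec, dotProduct,
          Finset.mul_sum]
        apply Finset.sum_congr rfl; intro i _
        apply Finset.sum_congr rfl; intro j _
        ring
      have split : ∑ i, ∑ j, adjA G i j * (1 - y i * y j)
          = msum (adjA G) - ∑ i, ∑ j, adjA G i j * (y i * y j) := by
        unfold msum
        rw [← Finset.sum_sub_distrib]
        apply Finset.sum_congr rfl; intro i _
        rw [← Finset.sum_sub_distrib]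
        apply Finset.sum_congr rfl; intro j _
        ring
      rw [expand]
      have := split.symm.trans hc
      linarith
    have hD : y ⬝ᵥ (Matrix.diagonal dopt).mulVec y = ∑ i, dopt i := by
      simp only [dotProduct, Matrix.mulVec_diagonal]
      apply Finset.sum_congr rfl; intro i _
      have h2 : y i * (dopt i * y i) = dopt i * y i ^ 2 := by ring
      rw [h2, hy1 i, mul_one]
    rw [Matrix.add_mulVec, dotProduct_add, hA, hD, msum_adjA, hsum]
    ring
  rw [hnum, hrhs]
  simp
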